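/- arXiv:1808.01851 — 4 statements merged into one kernel-verified Lean document; each statement's English description precedes it below -/
import Mathlib

section
/- Let a ∈ (-1,1) and let v be a C² function on ℝ^{n+1} \ {y = 0}. Define u(x,y) = v(x,y) · y·|y|^{-a}. Then at every point with y ≠ 0, div(|y|^{2-a} ∇v) = y·|y|^{-a} · div(|y|^a ∇u); in particular, u satisfies div(|y|^a ∇u) = 0 away from {y=0} if and only if v satisfies div(|y|^{2-a} ∇v) = 0 away from {y=0}. -/
noncomputable section

/-- Partial derivative in the `i`-th horizontal direction. -/
def pderivX {n : ℕ} (u : (Fin n → ℝ) × ℝ → ℝ) (i : Fin n) (X : (Fin n → ℝ) × ℝ) : ℝ :=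
  deriv (fun t => u (Function.update X.1 i t, X.2)) (X.1 i)

/-- Partial derivative in the vertical (`y`) direction. -/
def pderivY {n : ℕ} (u : (Fin n → ℝ) × ℝ → ℝ) (X : (Fin n → ℝ) × ℝ) : ℝ :=
  deriv (fun t => u (X.1, t)) X.2

/-- `La a u = div(|y|^a ∇u)`, computed in coordinates on `ℝⁿ × ℝ`. -/
def La {n : ℕ} (a : ℝ) (u : (Fin n → ℝ) × ℝ → ℝ) (X : (Fin n → ℝ) × ℝ) : ℝ :=
  (∑ i, pderivX (fun Y => |Y.2| ^ a * pderivX u i Y) i X)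
    + pderivY (fun Y => |Y.2| ^ a * pderivY u Y) X

/-! With `g y = y * |y| ^ (-a)` one has `|y| ^ a * g y = y`, `|y| ^ (2 - a) = y * g y` and
`g' = (1 - a) * |y| ^ (-a)`. Since `g` depends only on `y`, it passes through the horizontal
derivatives, and the two identities match the horizontal terms. Vertically, the `a`-flux of
`u = v g` is `|y| ^ a * ∂_y (v g) = y ∂_y v + (1 - a) v`, whose derivative
`y ∂_yy v + (2 - a) ∂_y v` is `g⁻¹ ∂_y (|y| ^ (2 - a) ∂_y v)`. -/

theorem hasDerivAt_abs_rpow_of_ne_zero {x : ℝ} (hx : x ≠ 0) (p : ℝ) :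
    HasDerivAt (fun x : ℝ ↦ |x| ^ p) (p * |x| ^ p / x) x := by
  refine ((hasDerivAt_abs hx).rpow_const (Or.inl (abs_ne_zero.mpr hx))).congr_deriv ?_
  rw [Real.rpow_sub_one (abs_ne_zero.mpr hx)]
  rcases hx.lt_or_gt with h | h
  · rw [sign_neg h, abs_of_neg h, SignType.coe_neg_one]; field_simp
  · rw [sign_pos h, abs_of_pos h, SignType.coe_one]; field_simp

theorem hasDerivAt_mul_abs_rpow_neg {x : ℝ} (hx : x ≠ 0) (a : ℝ) :
    HasDerivAt (fun x : ℝ ↦ x * |x| ^ (-a)) ((1 - a) * |x| ^ (-a)) x := by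
  refine ((hasDerivAt_id' x).fun_mul (hasDerivAt_abs_rpow_of_ne_zero hx (-a))).congr_deriv ?_
  field_simp
  ring

theorem abs_rpow_mul_abs_rpow_neg {y : ℝ} (hy : y ≠ 0) (a : ℝ) : |y| ^ a * |y| ^ (-a) = 1 := by
  rw [Real.rpow_neg (abs_nonneg y), mul_inv_cancel₀ (by positivity)]

theorem abs_rpow_mul_mul_abs_rpow_neg (y a : ℝ) : |y| ^ a * (y * |y| ^ (-a)) = y := by
  rcases eq_or_ne y 0 with rfl | hy
  · simp
  · linear_combination y * abs_rpow_mul_abs_rpow_neg hy a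

theorem abs_rpow_two_sub {y : ℝ} (hy : y ≠ 0) (a : ℝ) : |y| ^ (2 - a) = y * (y * |y| ^ (-a)) := by
  rw [sub_eq_add_neg, Real.rpow_add (abs_pos.mpr hy), Real.rpow_two, sq_abs, sq, mul_assoc]

theorem pderivX_mul_left_of_snd {n : ℕ} (φ : ℝ → ℝ) (f : (Fin n → ℝ) × ℝ → ℝ) (i : Fin n)
    (X : (Fin n → ℝ) × ℝ) :
    pderivX (fun Y ↦ φ Y.2 * f Y) i X = φ X.2 * pderivX f i X := by
  simp only [pderivX]
  exact deriv_const_mul_field _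

open Filter Topology

theorem abs_rpow_mul_deriv_mul_mul_abs_rpow_neg {V : ℝ → ℝ} {t : ℝ} (ht : t ≠ 0) (a : ℝ)
    (hV : DifferentiableAt ℝ V t) :
    |t| ^ a * deriv (fun s ↦ V s * (s * |s| ^ (-a))) t = t * deriv V t + (1 - a) * V t := by
  rw [(hV.hasDerivAt.fun_mul (hasDerivAt_mul_abs_rpow_neg ht a)).deriv]
  linear_combination (t * deriv V t + (1 - a) * V t) * abs_rpow_mul_abs_rpow_neg ht a

theorem deriv_abs_rpow_two_sub_mul_deriv {V : ℝ → ℝ} {y : ℝ} (hy : y ≠ 0) (a : ℝ)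
    (hV : ∀ᶠ t in 𝓝 y, DifferentiableAt ℝ V t) (hV' : DifferentiableAt ℝ (deriv V) y) :
    deriv (fun t ↦ |t| ^ (2 - a) * deriv V t) y
      = y * |y| ^ (-a) * deriv (fun t ↦ |t| ^ a * deriv (fun s ↦ V s * (s * |s| ^ (-a))) t) y := by
  have hflux : (fun t ↦ |t| ^ a * deriv (fun s ↦ V s * (s * |s| ^ (-a))) t)
      =ᶠ[𝓝 y] fun t ↦ t * deriv V t + (1 - a) * V t := by
    filter_upwards [hV, isOpen_ne.mem_nhds hy] with t hVt ht
    exact abs_rpow_mul_deriv_mul_mul_abs_rpow_neg ht a hVt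
  have hV₀ : HasDerivAt V (deriv V y) y := hV.self_of_nhds.hasDerivAt
  rw [hflux.deriv_eq,
    ((hasDerivAt_id' y).fun_mul hV'.hasDerivAt |>.fun_add (hV₀.const_mul (1 - a))).deriv,
    ((hasDerivAt_abs_rpow_of_ne_zero hy (2 - a)).fun_mul hV'.hasDerivAt).deriv,
    abs_rpow_two_sub hy a]
  field_simp
  ring

section

variable {n : ℕ} {a : ℝ} {u v : (Fin n → ℝ) × ℝ → ℝ} {X : (Fin n → ℝ) × ℝ}

theorem pderivX_abs_rpow_two_sub_mul_pderivX (hu : ∀ Y, u Y = v Y * (Y.2 * |Y.2| ^ (-a)))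
    (hX : X.2 ≠ 0) (i : Fin n) :
    pderivX (fun Y ↦ |Y.2| ^ (2 - a) * pderivX v i Y) i X
      = X.2 * |X.2| ^ (-a) * pderivX (fun Y ↦ |Y.2| ^ a * pderivX u i Y) i X := by
  have hux : pderivX u i = fun Y ↦ Y.2 * |Y.2| ^ (-a) * pderivX v i Y := by
    funext Y
    rw [funext fun Y ↦ (hu Y).trans (mul_comm _ _)]
    exact pderivX_mul_left_of_snd (fun y ↦ y * |y| ^ (-a)) v i Y
  have hflux : (fun Y ↦ |Y.2| ^ a * pderivX u i Y) = fun Y ↦ Y.2 * pderivX v i Y := by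
    funext Y
    rw [hux, ← mul_assoc, abs_rpow_mul_mul_abs_rpow_neg]
  rw [hflux, pderivX_mul_left_of_snd (fun y ↦ y), pderivX_mul_left_of_snd (fun y ↦ |y| ^ (2 - a)),
    abs_rpow_two_sub hX a]
  ring

theorem pderivY_abs_rpow_two_sub_mul_pderivY (hv : ContDiffOn ℝ 2 v {Y | Y.2 ≠ 0})
    (hu : ∀ Y, u Y = v Y * (Y.2 * |Y.2| ^ (-a))) (hX : X.2 ≠ 0) :
    pderivY (fun Y ↦ |Y.2| ^ (2 - a) * pderivY v Y) X
      = X.2 * |X.2| ^ (-a) * pderivY (fun Y ↦ |Y.2| ^ a * pderivY u Y) X := by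
  have hV : ContDiffOn ℝ 2 (fun s ↦ v (X.1, s)) {t | t ≠ 0} :=
    hv.comp (contDiff_const.prodMk contDiff_id).contDiffOn fun _ ht ↦ ht
  have hV' : ContDiffOn ℝ 1 (deriv fun s ↦ v (X.1, s)) {t | t ≠ 0} :=
    hV.deriv_of_isOpen isOpen_ne (by norm_num)
  have hu' : (fun s ↦ u (X.1, s)) = fun s ↦ v (X.1, s) * (s * |s| ^ (-a)) := funext fun s ↦ hu _
  change deriv (fun t ↦ |t| ^ (2 - a) * deriv (fun s ↦ v (X.1, s)) t) X.2
    = X.2 * |X.2| ^ (-a) * deriv (fun t ↦ |t| ^ a * deriv (fun s ↦ u (X.1, s)) t) X.2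
  rw [hu']
  exact deriv_abs_rpow_two_sub_mul_deriv hX a
    (hV.differentiableOn two_ne_zero |>.eventually_differentiableAt (isOpen_ne.mem_nhds hX))
    (hV'.differentiableOn one_ne_zero |>.differentiableAt (isOpen_ne.mem_nhds hX))

theorem La_two_sub_eq_mul_La (hv : ContDiffOn ℝ 2 v {Y | Y.2 ≠ 0})
    (hu : ∀ Y, u Y = v Y * (Y.2 * |Y.2| ^ (-a))) (hX : X.2 ≠ 0) :
    La (2 - a) v X = X.2 * |X.2| ^ (-a) * La a u X := by
  simp only [La, mul_add, Finset.mul_sum, pderivX_abs_rpow_two_sub_mul_pderivX hu hX,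
    pderivY_abs_rpow_two_sub_mul_pderivY hv hu hX]

end

theorem La_antisymmetric_factorization_general (n : ℕ) (a : ℝ)
    (v : (Fin n → ℝ) × ℝ → ℝ)
    (hv : ContDiffOn ℝ 2 v {X : (Fin n → ℝ) × ℝ | X.2 ≠ 0})
    (u : (Fin n → ℝ) × ℝ → ℝ)
    (hu : ∀ X : (Fin n → ℝ) × ℝ, u X = v X * (X.2 * |X.2| ^ (-a))) :
    (∀ X : (Fin n → ℝ) × ℝ, X.2 ≠ 0 →
        La (2 - a) v X = X.2 * |X.2| ^ (-a) * La a u X) ∧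
    ((∀ X : (Fin n → ℝ) × ℝ, X.2 ≠ 0 → La a u X = 0) ↔
      (∀ X : (Fin n → ℝ) × ℝ, X.2 ≠ 0 → La (2 - a) v X = 0)) := by
  have hfactor X (hX : X.2 ≠ 0) := La_two_sub_eq_mul_La hv hu (X := X) hX
  refine ⟨hfactor, forall₂_congr fun X hX ↦ ?_⟩
  have hweight : X.2 * |X.2| ^ (-a) ≠ 0 := mul_ne_zero hX (by positivity)
  rw [hfactor X hX, mul_eq_zero, or_iff_right hweight]

/-- If `v` is `C²` away from `{y = 0}` and `u(x,y) = v(x,y)·y·|y|^{-a}`,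
then pointwise on `{y ≠ 0}` one has `L_{2-a} v = y·|y|^{-a} · L_a u`; in particular `u` is
`L_a`-harmonic away from `{y=0}` iff `v` is `L_{2-a}`-harmonic away from `{y=0}`. -/
theorem La_antisymmetric_factorization (n : ℕ) (a : ℝ) (ha : a ∈ Set.Ioo (-1 : ℝ) 1)
    (v : (Fin n → ℝ) × ℝ → ℝ)
    (hv : ContDiffOn ℝ 2 v {X : (Fin n → ℝ) × ℝ | X.2 ≠ 0})
    (u : (Fin n → ℝ) × ℝ → ℝ)
    (hu : ∀ X : (Fin n → ℝ) × ℝ, u X = v X * (X.2 * |X.2| ^ (-a))) :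
    (∀ X : (Fin n → ℝ) × ℝ, X.2 ≠ 0 →
        La (2 - a) v X = X.2 * |X.2| ^ (-a) * La a u X) ∧
    ((∀ X : (Fin n → ℝ) × ℝ, X.2 ≠ 0 → La a u X = 0) ↔
      (∀ X : (Fin n → ℝ) × ℝ, X.2 ≠ 0 → La (2 - a) v X = 0)) :=
  La_antisymmetric_factorization_general n a v hv u hu
end
end

section
/- Fix a ∈ (-1,1) and m ∈ ℕ. Define coefficients c(m,a,t) = (-1)^{m-t} / (2t)! · 1/(2^{m-t}(m-t)!) · ∏_{i=1}^{m-t} 1/(2i + a - 1) for 0 ≤ t ≤ m-1, and set p(x,y) = x^{2m}/(2m)! + Σ_{t=0}^{m-1} c(m,a,t) x^{2t} y^{2m-2t} for (x,y) ∈ ℝ². Then p satisfies the degenerate equation ∂_{xx} p + ∂_{yy} p + (a/y)·∂_y p = 0 at every point with y ≠ 0. -/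
/-!
Write `p = ∑_{t ≤ m} c_t x^{2t} y^{2m-2t}`, the top coefficient `c_m` being `1/(2m)!`. On a
monomial, `∂_xx` lowers the degree in `x` by two with factor `2t(2t-1)`, and the Bessel-type
operator `∂_yy + (a/y) ∂_y` lowers the degree in `y` by two with factor `(2m-2t)(2m-2t-1+a)`. The
coefficients are built to satisfy `c_{t+1} (2t+2)(2t+1) = -c_t (2m-2t)(2m-2t-1+a)`, so the two
contributions of the indices `t + 1` and `t` cancel and the sum telescopes to zero.
-/

noncomputable section

/-- The coefficients `c(m,a,t)` of the explicit `L_a`-harmonic homogeneous polynomials. -/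
def cCoef (m : ℕ) (a : ℝ) (t : ℕ) : ℝ :=
  (-1 : ℝ) ^ (m - t) / (Nat.factorial (2 * t) : ℝ) *
    (1 / ((2 : ℝ) ^ (m - t) * (Nat.factorial (m - t) : ℝ))) *
    ∏ i ∈ Finset.Icc 1 (m - t), (1 / (2 * (i : ℝ) + a - 1))

def pPol (m : ℕ) (a : ℝ) (x y : ℝ) : ℝ :=
  x ^ (2 * m) / (Nat.factorial (2 * m) : ℝ) +
    ∑ t ∈ Finset.range m, cCoef m a t * x ^ (2 * t) * y ^ (2 * m - 2 * t)

open Finset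

section MonomialSums

variable {𝕜 ι : Type*} [NontriviallyNormedField 𝕜] (s : Finset ι) (c : ι → 𝕜) (n : ι → ℕ)

theorem deriv_sum_mul_pow :
    deriv (fun z => ∑ i ∈ s, c i * z ^ n i) = fun z => ∑ i ∈ s, c i * n i * z ^ (n i - 1) := by
  funext z
  refine (HasDerivAt.fun_sum fun i _ => (hasDerivAt_pow (n i) z).const_mul (c i)).deriv.trans ?_
  simp only [mul_assoc]

theorem deriv_deriv_sum_mul_pow :
    deriv (deriv (fun z => ∑ i ∈ s, c i * z ^ n i)) =
      fun z => ∑ i ∈ s, c i * (n i * (n i - 1)) * z ^ (n i - 2) := by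
  rw [deriv_sum_mul_pow, deriv_sum_mul_pow s (fun i => c i * n i) (fun i => n i - 1)]
  funext z
  refine sum_congr rfl fun i _ => ?_
  rcases n i with _ | k
  · simp
  · simp [mul_assoc]

-- Exponent `1` must be excluded: there `y ^ (1 - 2) = 1` is a junk value and the formula fails.
theorem deriv_deriv_add_div_mul_deriv_sum_mul_pow (hn : ∀ i ∈ s, n i ≠ 1) (a : 𝕜) {y : 𝕜}
    (hy : y ≠ 0) :
    deriv (deriv (fun z => ∑ i ∈ s, c i * z ^ n i)) y +
        a / y * deriv (fun z => ∑ i ∈ s, c i * z ^ n i) y =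
      ∑ i ∈ s, c i * (n i * (n i - 1 + a)) * y ^ (n i - 2) := by
  rw [deriv_deriv_sum_mul_pow, deriv_sum_mul_pow, mul_sum, ← sum_add_distrib]
  refine sum_congr rfl fun i hi => ?_
  rcases hk : n i with _ | _ | k
  · simp
  · exact absurd hk (hn i hi)
  · simp only [Nat.add_sub_cancel, pow_succ]
    field_simp
    push_cast
    ring

end MonomialSums

theorem sum_range_succ_add_eq_zero {M : Type*} [AddCommMonoid M] (f g : ℕ → M) (n : ℕ)
    (hf : f 0 = 0) (hg : g n = 0) (h : ∀ t < n, f (t + 1) + g t = 0) :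
    ∑ t ∈ range (n + 1), (f t + g t) = 0 := by
  rw [sum_add_distrib, sum_range_succ' f, sum_range_succ g, hf, hg, add_zero, add_zero,
    ← sum_add_distrib]
  exact sum_eq_zero fun t ht => h t (mem_range.mp ht)

theorem cCoef_self (m : ℕ) (a : ℝ) : cCoef m a m = 1 / (2 * m).factorial := by
  simp [cCoef]

theorem cCoef_succ_mul_add_cCoef_mul {m t : ℕ} {a : ℝ} (ha : -1 < a) (ht : t < m) :
    cCoef m a (t + 1) * ((2 * t + 2) * (2 * t + 1)) +
      cCoef m a t * ((2 * m - 2 * t) * (2 * m - 2 * t - 1 + a)) = 0 := by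
  obtain ⟨j, rfl⟩ : ∃ j, m = t + j + 1 := ⟨m - t - 1, by omega⟩
  have hsub : t + j + 1 - t = j + 1 := by omega
  have hsub' : t + j + 1 - (t + 1) = j := by omega
  have hfac : ((2 * (t + 1)).factorial : ℝ) = (2 * t + 2) * (2 * t + 1) * (2 * t).factorial := by
    rw [show 2 * (t + 1) = 2 * t + 1 + 1 by ring, Nat.factorial_succ, Nat.factorial_succ]
    push_cast
    ring
  have hpos : 0 < 2 * ((j + 1 : ℕ) : ℝ) + a - 1 := by
    push_cast
    linarith [(j.cast_nonneg : (0 : ℝ) ≤ j)]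
  unfold cCoef
  rw [hsub, hsub', prod_Icc_succ_top (by omega), hfac, Nat.factorial_succ, pow_succ, pow_succ]
  field_simp
  push_cast
  ring

theorem pPol_eq_sum (m : ℕ) (a x y : ℝ) :
    pPol m a x y = ∑ t ∈ range (m + 1), cCoef m a t * x ^ (2 * t) * y ^ (2 * m - 2 * t) := by
  rw [sum_range_succ, cCoef_self, pPol]
  simp only [Nat.sub_self, pow_zero, mul_one]
  ring

/-- The explicit polynomial `p(x,y) = x^{2m}/(2m)! + Σ_t c(m,a,t) x^{2t} y^{2m-2t}`
satisfies the degenerate equation `∂_xx p + ∂_yy p + (a/y) ∂_y p = 0` at every point with `y ≠ 0`. -/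
theorem explicit_polynomial_La_harmonic (m : ℕ) (a : ℝ) (ha : a ∈ Set.Ioo (-1 : ℝ) 1) :
    ∀ x y : ℝ, y ≠ 0 →
      deriv (deriv (fun s => pPol m a s y)) x +
        deriv (deriv (fun t => pPol m a x t)) y +
        (a / y) * deriv (fun t => pPol m a x t) y = 0 := by
  intro x y hy
  have slice_x : (fun s => pPol m a s y) =
      fun s => ∑ t ∈ range (m + 1), cCoef m a t * y ^ (2 * m - 2 * t) * s ^ (2 * t) :=
    funext fun s => (pPol_eq_sum m a s y).trans (sum_congr rfl fun t _ => mul_right_comm _ _ _)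
  have slice_y : (fun u => pPol m a x u) =
      fun u => ∑ t ∈ range (m + 1), cCoef m a t * x ^ (2 * t) * u ^ (2 * m - 2 * t) :=
    funext (pPol_eq_sum m a x)
  rw [slice_x, slice_y, add_assoc, deriv_deriv_sum_mul_pow,
    deriv_deriv_add_div_mul_deriv_sum_mul_pow _ _ _ (fun t _ => by omega) a hy, ← sum_add_distrib]
  refine sum_range_succ_add_eq_zero _ _ m (by simp) (by simp) fun t ht => ?_
  rw [show 2 * (t + 1) - 2 = 2 * t by omega, show 2 * m - 2 * (t + 1) = 2 * m - 2 * t - 2 by omega]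
  push_cast [Nat.cast_sub (show 2 * t ≤ 2 * m by omega)]
  linear_combination x ^ (2 * t) * y ^ (2 * m - 2 * t - 2) * cCoef_succ_mul_add_cCoef_mul ha.1 ht
end
end

section
/- Let a ∈ (-1,1), and let p : ℝ^{n+1} → ℝ be a polynomial that is homogeneous of degree k ≥ 2. Suppose p vanishes to order k at a point Z ∈ ℝ^{n+1}, i.e. D^ν p(Z) = 0 for every multi-index ν with |ν| ≤ k−1. Then p is invariant under translation by Z: p(X + Z) = p(X) for all X ∈ ℝ^{n+1}. Moreover, the set Γ_k(p) = {Z : D^ν p(Z) = 0 for all |ν| ≤ k−1} is a vector subspace of ℝ^{n+1}. -/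
/-!
Restricted to the line `t ↦ W + t • X`, a polynomial `p` homogeneous of degree `k` becomes a
polynomial in `t` of degree `≤ k`, whose coefficients of order `< k` are (up to factorials) the
derivatives `D^j p(W)(X, …, X)`. If these vanish, `p (W + t • X) = a * t ^ k`, and homogeneity
gives `p (X + s • W) = s ^ k * p (W + s⁻¹ • X) = a` for all `s ≠ 0`; continuity at `s = 0` then
yields `p (X + W) = a = p X`. Conversely every period `W` of `p` has `D^j p(W) = D^j p(0)`, so
`Γ_k(p)` is the set of periods of `p` as soon as it contains one point `Z`; periods add, and
homogeneity makes them stable under scaling.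
-/

open scoped Nat

namespace Polynomial

variable {𝕜 : Type*} [NontriviallyNormedField 𝕜]

theorem iteratedDeriv_eval (q : 𝕜[X]) (j : ℕ) :
    iteratedDeriv j (fun t => q.eval t) = fun t => (derivative^[j] q).eval t := by
  induction j with
  | zero => simp
  | succ j ih =>
    rw [iteratedDeriv_succ, ih]
    ext t
    rw [Function.iterate_succ_apply']
    exact Polynomial.deriv _

theorem iteratedDeriv_eval_zero (q : 𝕜[X]) (j : ℕ) :
    iteratedDeriv j (fun t => q.eval t) 0 = j ! * q.coeff j := by
  rw [iteratedDeriv_eval]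
  dsimp only
  rw [← coeff_zero_eq_eval_zero, coeff_iterate_derivative, zero_add,
    Nat.descFactorial_self, nsmul_eq_mul]

theorem eq_C_mul_X_pow_of_coeff_eq_zero {R : Type*} [Semiring R] {q : R[X]} {k : ℕ}
    (hdeg : q.natDegree ≤ k) (hlow : ∀ j < k, q.coeff j = 0) : q = C (q.coeff k) * X ^ k := by
  ext j
  rw [coeff_C_mul_X_pow]
  rcases lt_trichotomy j k with hj | rfl | hj
  · simp [hj.ne, hlow j hj]
  · simp
  · simp [hj.ne', coeff_eq_zero_of_natDegree_lt (hdeg.trans_lt hj)]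

end Polynomial

namespace MvPolynomial

theorem natDegree_aeval_le_totalDegree {σ R : Type*} [CommSemiring R] (P : MvPolynomial σ R)
    {g : σ → Polynomial R} (hg : ∀ i, (g i).natDegree ≤ 1) :
    (aeval g P).natDegree ≤ P.totalDegree := by
  rw [aeval_def, eval₂_eq]
  refine Polynomial.natDegree_sum_le_of_forall_le _ _ fun d hd => ?_
  refine (Polynomial.natDegree_C_mul_le _ _).trans ?_
  refine (Polynomial.natDegree_prod_le _ _).trans ?_
  calc ∑ i ∈ d.support, (g i ^ d i).natDegree ≤ ∑ i ∈ d.support, d i :=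
        Finset.sum_le_sum fun i _ => Polynomial.natDegree_pow_le_of_le _ (hg i) |>.trans (by simp)
    _ ≤ P.totalDegree := le_totalDegree hd

theorem contDiff_eval {𝕜 σ : Type*} [NontriviallyNormedField 𝕜] [Fintype σ]
    (P : MvPolynomial σ 𝕜) {n : WithTop ℕ∞} : ContDiff 𝕜 n fun x : σ → 𝕜 => eval x P := by
  induction P using induction_on with
  | C a => simpa using contDiff_const
  | add P Q hP hQ => simpa using hP.add hQ
  | mul_X P i hP => simpa using hP.mul (contDiff_apply 𝕜 𝕜 i)

variable {σ R : Type*} [CommSemiring R] {P : MvPolynomial σ R} {k : ℕ}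

theorem IsHomogeneous.eval_smul (hP : P.IsHomogeneous k) (c : R) (x : σ → R) :
    eval (c • x) P = c ^ k * eval x P := by
  rw [eval_eq, eval_eq, Finset.mul_sum]
  refine Finset.sum_congr rfl fun d hd => ?_
  simp only [Pi.smul_apply, smul_eq_mul, mul_pow, Finset.prod_mul_distrib,
    Finset.prod_pow_eq_pow_sum, ← hP.degree_eq_sum_deg_support hd]
  ring

theorem IsHomogeneous.exists_natDegree_le_eval_add_smul (hP : P.IsHomogeneous k) (u v : σ → R) :
    ∃ q : Polynomial R, q.natDegree ≤ k ∧ ∀ t, q.eval t = eval (u + t • v) P := by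
  refine ⟨MvPolynomial.aeval (fun i => Polynomial.C (u i) + Polynomial.C (v i) * Polynomial.X) P,
    (natDegree_aeval_le_totalDegree P fun i => ?_).trans hP.totalDegree_le, fun t => ?_⟩
  · compute_degree!
  · have hid : (Polynomial.evalRingHom t).comp (algebraMap R (Polynomial R)) = RingHom.id R := by
      ext; simp
    rw [aeval_def, polynomial_eval_eval₂, hid]
    congr 1
    ext i
    simp only [Polynomial.eval_add, Polynomial.eval_C, Polynomial.eval_mul, Polynomial.eval_X,
      Pi.add_apply, Pi.smul_apply, smul_eq_mul, mul_comm]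

end MvPolynomial

section

variable {𝕜 E F : Type*} [NontriviallyNormedField 𝕜] [NormedAddCommGroup E] [NormedSpace 𝕜 E]
  [NormedAddCommGroup F] [NormedSpace 𝕜 F]

theorem iteratedDeriv_comp_add_smul {f : E → F} {j : ℕ} (hf : ContDiff 𝕜 j f) (u v : E)
    (t : 𝕜) :
    iteratedDeriv j (fun s : 𝕜 => f (u + s • v)) t =
      iteratedFDeriv 𝕜 j f (u + t • v) fun _ => v := by
  have hshift : ContDiff 𝕜 j fun z => f (u + z) := hf.comp (contDiff_const.add contDiff_id)
  have := (ContinuousLinearMap.toSpanSingleton 𝕜 v).iteratedFDeriv_comp_right hshift t le_rfl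
  rw [iteratedDeriv_eq_iteratedFDeriv]
  simp only [Function.comp_def, ContinuousLinearMap.toSpanSingleton_apply] at this
  simp [this, iteratedFDeriv_comp_add_left]

theorem Function.Periodic.iteratedFDeriv_eq {f : E → F} {c : E} (h : Function.Periodic f c)
    (n : ℕ) (x : E) : iteratedFDeriv 𝕜 n f (x + c) = iteratedFDeriv 𝕜 n f x := by
  rw [← iteratedFDeriv_comp_add_right, h.funext]

end

section Homogeneous

variable {𝕜 E : Type*} [NontriviallyNormedField 𝕜] [NormedAddCommGroup E] [NormedSpace 𝕜 E]
  {p : E → 𝕜} {k : ℕ}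

theorem Function.Periodic.smul_of_homogeneous (hhom : ∀ (c : 𝕜) x, p (c • x) = c ^ k * p x)
    {W : E} (hW : Function.Periodic p W) (c : 𝕜) : Function.Periodic p (c • W) := by
  intro X
  rcases eq_or_ne c 0 with rfl | hc
  · simp
  have hX : X = c • (c⁻¹ • X) := by rw [smul_smul, mul_inv_cancel₀ hc, one_smul]
  rw [hX, ← smul_add, hhom, hhom, hW]

variable (p) in
def periodSubmodule (hhom : ∀ (c : 𝕜) x, p (c • x) = c ^ k * p x) : Submodule 𝕜 E where
  carrier := {W | Function.Periodic p W}
  zero_mem' := by simp [Function.Periodic]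
  add_mem' := Function.Periodic.add_period
  smul_mem' c _ hW := Function.Periodic.smul_of_homogeneous hhom hW c

theorem periodic_of_iteratedFDeriv_eq_zero [CharZero 𝕜]
    (hhom : ∀ (c : 𝕜) x, p (c • x) = c ^ k * p x)
    (hline : ∀ u v : E, ∃ q : Polynomial 𝕜, q.natDegree ≤ k ∧ ∀ t, q.eval t = p (u + t • v))
    (hp : ContDiff 𝕜 k p) {W : E} (hW : ∀ j < k, iteratedFDeriv 𝕜 j p W = 0) :
    Function.Periodic p W := by
  intro X
  obtain ⟨q, hqdeg, hq⟩ := hline W X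
  have hcoeff : ∀ j < k, q.coeff j = 0 := by
    intro j hj
    have h := q.iteratedDeriv_eval_zero j
    rw [funext hq, iteratedDeriv_comp_add_smul (hp.of_le (by exact_mod_cast hj.le)), zero_smul,
      add_zero, hW j hj] at h
    exact (mul_eq_zero.mp h.symm).resolve_left (Nat.cast_ne_zero.mpr j.factorial_ne_zero)
  set a := q.coeff k
  have hline_eq : ∀ t, p (W + t • X) = a * t ^ k := by
    intro t
    rw [← hq, Polynomial.eq_C_mul_X_pow_of_coeff_eq_zero hqdeg hcoeff]
    simp [a]
  have hconst : ∀ s : 𝕜, s ≠ 0 → p (X + s • W) = a := by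
    intro s hs
    have : X + s • W = s • (W + s⁻¹ • X) := by
      rw [smul_add, smul_smul, mul_inv_cancel₀ hs, one_smul, add_comm]
    rw [this, hhom, hline_eq, inv_pow, mul_left_comm, mul_inv_cancel₀ (pow_ne_zero _ hs), mul_one]
  have hcont : Continuous fun s : 𝕜 => p (X + s • W) := hp.continuous.comp (by fun_prop)
  have h0 : p X = a := by
    have hext := Continuous.ext_on (dense_compl_singleton 0) hcont continuous_const hconst
    simpa using congrFun hext 0
  rw [h0, ← hconst 1 one_ne_zero, one_smul]

end Homogeneous

theorem homogeneous_polynomial_spine_general (n k : ℕ)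
    (P : MvPolynomial (Fin (n + 1)) ℝ) (hP : P.IsHomogeneous k)
    (p : EuclideanSpace ℝ (Fin (n + 1)) → ℝ)
    (hp : ∀ X : EuclideanSpace ℝ (Fin (n + 1)), p X = MvPolynomial.eval (fun i => X i) P)
    (Z : EuclideanSpace ℝ (Fin (n + 1)))
    (hZ : ∀ j : ℕ, j ≤ k - 1 → iteratedFDeriv ℝ j p Z = 0) :
    (∀ X : EuclideanSpace ℝ (Fin (n + 1)), p (X + Z) = p X) ∧
    ∃ V : Submodule ℝ (EuclideanSpace ℝ (Fin (n + 1))),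
      (V : Set (EuclideanSpace ℝ (Fin (n + 1)))) =
        {W : EuclideanSpace ℝ (Fin (n + 1)) |
          ∀ j : ℕ, j ≤ k - 1 → iteratedFDeriv ℝ j p W = 0} := by
  replace hp : ∀ X, p X = MvPolynomial.eval X.ofLp P := hp
  have hhom : ∀ (c : ℝ) X, p (c • X) = c ^ k * p X := fun c X => by
    simpa [hp] using hP.eval_smul c X
  have hline : ∀ u v, ∃ q : Polynomial ℝ, q.natDegree ≤ k ∧ ∀ t, q.eval t = p (u + t • v) :=
    fun u v => by simpa [hp] using hP.exists_natDegree_le_eval_add_smul u v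
  have hdiff : ContDiff ℝ k p := by
    rw [funext hp]
    exact P.contDiff_eval.comp PiLp.contDiff_ofLp
  have hperiodic : ∀ W, (∀ j ≤ k - 1, iteratedFDeriv ℝ j p W = 0) → Function.Periodic p W :=
    fun W hW => periodic_of_iteratedFDeriv_eq_zero hhom hline hdiff fun j hj => hW j (by omega)
  have hZper := hperiodic Z hZ
  refine ⟨hZper, periodSubmodule p hhom, Set.ext fun W => ⟨fun hW j hj => ?_, hperiodic W⟩⟩
  calc iteratedFDeriv ℝ j p W = iteratedFDeriv ℝ j p 0 := by
        simpa using (hW : Function.Periodic p W).iteratedFDeriv_eq j 0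
    _ = iteratedFDeriv ℝ j p Z := by simpa using (hZper.iteratedFDeriv_eq j 0).symm
    _ = 0 := hZ j hj

/-- If a homogeneous polynomial `p` of degree `k ≥ 2` on `ℝ^{n+1}` vanishes
to order `k` at `Z` (all derivatives of order `≤ k-1` vanish at `Z`), then `p` is invariant
under translation by `Z`; moreover the set `Γ_k(p)` of such points is a vector subspace. -/
theorem homogeneous_polynomial_spine (n k : ℕ) (hk : 2 ≤ k)
    (P : MvPolynomial (Fin (n + 1)) ℝ) (hP : P.IsHomogeneous k)
    (p : EuclideanSpace ℝ (Fin (n + 1)) → ℝ)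
    (hp : ∀ X : EuclideanSpace ℝ (Fin (n + 1)), p X = MvPolynomial.eval (fun i => X i) P)
    (Z : EuclideanSpace ℝ (Fin (n + 1)))
    (hZ : ∀ j : ℕ, j ≤ k - 1 → iteratedFDeriv ℝ j p Z = 0) :
    (∀ X : EuclideanSpace ℝ (Fin (n + 1)), p (X + Z) = p X) ∧
    ∃ V : Submodule ℝ (EuclideanSpace ℝ (Fin (n + 1))),
      (V : Set (EuclideanSpace ℝ (Fin (n + 1)))) =
        {W : EuclideanSpace ℝ (Fin (n + 1)) |
          ∀ j : ℕ, j ≤ k - 1 → iteratedFDeriv ℝ j p W = 0} :=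
  homogeneous_polynomial_spine_general n k P hP p hp Z hZ
end

section
/- Let u : B₁ ⊂ ℝ^{n+1} → ℝ be continuous with u(X₀) = 0 at X₀ ∈ Σ ∩ B₁. Suppose for some k ≥ 1 there exist constants c, C > 0 and R > 0 such that c r^k ≤ sup_{∂B_r(X₀)} |u| ≤ C r^k for all 0 < r < R (nondegeneracy and growth at order k). If additionally the rescalings u_r(X) = u(X₀+rX)/r^k converge uniformly on compact sets along every sequence r_j → 0 to limits in a fixed finite-dimensional space P of k-homogeneous polynomials, and any two subsequential limits p, q ∈ P that agree on ∂B₁ in the L²(|y|^a dσ)-sense must coincide, and moreover the Monneau monotonicity holds (r ↦ r^{-(n+a+2k)}∫_{∂B_r(X₀)}|y|^a(u−p_{X₀})²dσ is nondecreasing for each p ∈ P), then the blow-up limit is unique: there exists exactly one nonzero p ∈ P with u(X₀+rX)/r^k → p(X) uniformly on compact sets as r → 0. -/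
open MeasureTheory Metric Set Filter
open scoped RealInnerProductSpace

noncomputable section

/-- Surface measure on the unit sphere of `ℝ^{n+1}`, obtained from Lebesgue measure. -/
def sphereMeasure (n : ℕ) :
    Measure (Metric.sphere (0 : EuclideanSpace ℝ (Fin (n + 1))) 1) :=
  (volume : Measure (EuclideanSpace ℝ (Fin (n + 1)))).toSphere

/-- Surface integral of `f` over the sphere `∂B_r(X₀)` (with the Jacobian factor `r^n`). -/
def sphInt (n : ℕ) (f : EuclideanSpace ℝ (Fin (n + 1)) → ℝ)
    (X₀ : EuclideanSpace ℝ (Fin (n + 1))) (r : ℝ) : ℝ :=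
  r ^ n * ∫ ω, f (X₀ + r • (ω : EuclideanSpace ℝ (Fin (n + 1)))) ∂(sphereMeasure n)

/-!
Along one sequence `r_j → 0` the rescalings `u_r = u(X₀ + r·)/rᵏ` converge to some `p ∈ P`, so the
Monneau quantity `M_p(r) = ∫_{∂B₁} |y|^a (u_r - p)² dσ` tends to `0` along `r_j`. Being monotone,
`M_p` then tends to `0` as `r → 0⁺`, hence every other subsequential limit `q` satisfies
`∫_{∂B₁} |y|^a (q - p)² dσ = 0`, i.e. `q = p`, and compactness upgrades this to convergence of the
whole family. Passing to the limit in `M_p` needs the weight `|y|^a` to be integrable on the sphere,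
which holds for `a > -1` by comparison with `|y|^a` on the unit ball in polar coordinates. The limit
is nonzero by nondegeneracy.
-/

open scoped Topology ENNReal

theorem lintegral_toSphere_eq_mul_setLIntegral_ball {E : Type*} [NormedAddCommGroup E]
    [NormedSpace ℝ E] [FiniteDimensional ℝ E] [MeasurableSpace E] [BorelSpace E] [Nontrivial E]
    (μ : Measure E) [μ.IsAddHaarMeasure] {g : E → ℝ≥0∞} (hg : Measurable g) :
    ∫⁻ ω, g ω ∂μ.toSphere =
      Module.finrank ℝ E * ∫⁻ x in ball 0 1, g (‖x‖⁻¹ • x) ∂μ := by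
  set d := Module.finrank ℝ E
  have hd : 0 < d := Module.finrank_pos
  let one : Ioi (0 : ℝ) := ⟨1, mem_Ioi.2 one_pos⟩
  have hpolar : ∫⁻ x in ball 0 1, g (‖x‖⁻¹ • x) ∂μ =
      ∫⁻ z, g z.1 * (Iio one).indicator 1 z.2
        ∂(μ.toSphere.prod (Measure.volumeIoiPow (d - 1))) := by
    calc ∫⁻ x in ball 0 1, g (‖x‖⁻¹ • x) ∂μ
        = ∫⁻ x in {0}ᶜ, (ball 0 1).indicator (fun x => g (‖x‖⁻¹ • x)) x ∂μ := by
          rw [restrict_compl_singleton, lintegral_indicator measurableSet_ball]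
      _ = _ := by
          rw [← lintegral_subtype_comap (measurableSet_singleton _).compl,
            ← μ.measurePreserving_homeomorphUnitSphereProd.lintegral_comp_emb
              (Homeomorph.measurableEmbedding _)]
          congr 1 with x
          have hx : (homeomorphUnitSphereProd E x).2 ∈ Iio one ↔ ‖(x : E)‖ < 1 := by
            rw [mem_Iio, ← Subtype.coe_lt_coe, homeomorphUnitSphereProd_apply_snd_coe]
          by_cases h : ‖(x : E)‖ < 1 <;> simp [indicator, hx, h]
  have hIio : Measure.volumeIoiPow (d - 1) (Iio one) = (d : ℝ≥0∞)⁻¹ := by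
    rw [Measure.volumeIoiPow_apply_Iio]
    simp [one, Nat.cast_pred hd, ENNReal.ofReal_inv_of_pos, hd]
  rw [hpolar, lintegral_prod_mul (f := fun ω : sphere (0 : E) 1 => g ω)
    (g := (Iio one).indicator 1) (hg.comp measurable_subtype_coe).aemeasurable
    (aemeasurable_one.indicator measurableSet_Iio), lintegral_indicator_one measurableSet_Iio,
    hIio, ← mul_assoc, mul_comm _ (lintegral _ _), mul_assoc, ENNReal.mul_inv_cancel, mul_one]
  all_goals simp [hd.ne']

theorem integrableOn_ball_comp_apply {ι : Type*} [Fintype ι] {f : ℝ → ℝ}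
    (hf : IntegrableOn f (Icc (-1) 1)) (i : ι) :
    IntegrableOn (fun x : EuclideanSpace ℝ ι => f (x i)) (ball 0 1) := by
  have hcube : IntegrableOn (fun x : ι → ℝ => f (x i)) (univ.pi fun _ => Icc (-1) 1) := by
    rw [IntegrableOn, volume_pi, Measure.restrict_pi_pi]
    exact integrable_comp_eval hf
  rw [← (PiLp.volume_preserving_ofLp ι).integrableOn_comp_preimage
    (MeasurableEquiv.toLp 2 (ι → ℝ)).symm.measurableEmbedding] at hcube
  refine hcube.mono_set fun x hx j _ => abs_le.1 ?_
  exact ((PiLp.norm_apply_le x j).trans (mem_ball_zero_iff.1 hx).le)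

theorem locallyIntegrable_abs_rpow {a : ℝ} (ha : -1 < a) :
    LocallyIntegrable (fun t : ℝ => |t| ^ a) := by
  refine locallyIntegrable_of_norm_le_rpow (C := 1) (α := -a) (by simp) (by simp; linarith)
    (Eventually.of_forall fun t => ?_) (continuous_abs.measurable.pow_const a).aestronglyMeasurable
  simp [abs_of_nonneg (Real.rpow_nonneg (abs_nonneg t) a)]

theorem abs_normalize_apply_rpow_le {ι : Type*} [Fintype ι] {x : EuclideanSpace ℝ ι}
    (hx : ‖x‖ < 1) (i : ι) (a : ℝ) : |(‖x‖⁻¹ • x) i| ^ a ≤ |x i| ^ a + 1 := by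
  rcases eq_or_ne x 0 with rfl | hx0
  · simp
  have hxi : |x i| ≤ ‖x‖ := by simpa using PiLp.norm_apply_le x i
  rw [PiLp.smul_apply, smul_eq_mul, abs_mul, abs_inv, abs_norm]
  rcases le_or_gt 0 a with ha | ha
  · have hle : ‖x‖⁻¹ * |x i| ≤ 1 := by rwa [inv_mul_le_iff₀ (norm_pos_iff.2 hx0), mul_one]
    exact (Real.rpow_le_one (by positivity) hle ha).trans (le_add_of_nonneg_left (by positivity))
  rcases (abs_nonneg (x i)).eq_or_lt with h0 | hpos
  · simp [← h0]
  have hle : |x i| ≤ ‖x‖⁻¹ * |x i| :=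
    le_mul_of_one_le_left hpos.le (one_le_inv₀ (norm_pos_iff.2 hx0) |>.2 hx.le)
  exact (Real.rpow_le_rpow_of_nonpos hpos hle ha.le).trans (le_add_of_nonneg_right zero_le_one)

theorem integrable_abs_apply_rpow_toSphere {ι : Type*} [Fintype ι] [Nonempty ι] (i : ι)
    {a : ℝ} (ha : -1 < a) :
    Integrable (fun ω : sphere (0 : EuclideanSpace ℝ ι) 1 => |(ω : EuclideanSpace ℝ ι) i| ^ a)
      volume.toSphere := by
  have hmeas : Measurable fun x : EuclideanSpace ℝ ι => |x i| ^ a :=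
    ((continuous_abs.comp (EuclideanSpace.proj (𝕜 := ℝ) i).continuous).measurable.pow_const a)
  have hball : IntegrableOn (fun x : EuclideanSpace ℝ ι => |x i| ^ a + 1) (ball 0 1) :=
    integrableOn_ball_comp_apply
      (((locallyIntegrable_abs_rpow ha).integrableOn_isCompact isCompact_Icc).add
        (integrableOn_const measure_Icc_lt_top.ne)) i
  refine ⟨(hmeas.comp measurable_subtype_coe).aestronglyMeasurable, ?_⟩
  rw [hasFiniteIntegral_iff_ofReal (Eventually.of_forall fun ω => by positivity),
    lintegral_toSphere_eq_mul_setLIntegral_ball _ hmeas.ennreal_ofReal]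
  refine ENNReal.mul_lt_top (ENNReal.natCast_lt_top _) (lt_of_le_of_lt ?_ hball.lintegral_lt_top)
  refine setLIntegral_mono' measurableSet_ball fun x hx => ENNReal.ofReal_le_ofReal ?_
  exact abs_normalize_apply_rpow_le (mem_ball_zero_iff.1 hx) i a

theorem tendsto_integral_mul_sq_sub_of_tendstoUniformly {α ι : Type*} [TopologicalSpace α]
    [CompactSpace α] [MeasurableSpace α] [OpensMeasurableSpace α] {μ : Measure α}
    {w : α → ℝ} (hw : Integrable w μ) {l : Filter ι} [l.IsCountablyGenerated] [l.NeBot]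
    {F : ι → α → ℝ} {f g : α → ℝ} (hF : ∀ i, Continuous (F i)) (hg : Continuous g)
    (hFf : TendstoUniformly F f l) :
    Tendsto (fun i => ∫ x, w x * (F i x - g x) ^ 2 ∂μ) l
      (𝓝 (∫ x, w x * (f x - g x) ^ 2 ∂μ)) := by
  have hf : Continuous f := hFf.continuous (Frequently.of_forall hF)
  obtain ⟨M, hM⟩ := isCompact_univ.exists_bound_of_continuousOn (hf.sub hg).continuousOn
  have hbound : ∀ᶠ i in l, ∀ x, (F i x - g x) ^ 2 ≤ (M + 1) ^ 2 := by
    filter_upwards [Metric.tendstoUniformly_iff.1 hFf 1 one_pos] with i hi x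
    have h1 : |F i x - f x| ≤ 1 := by simpa [Real.dist_eq, abs_sub_comm] using (hi x).le
    have h2 : |f x - g x| ≤ M := by simpa using hM x (mem_univ x)
    rw [← sq_abs]
    gcongr
    calc |F i x - g x| = |(F i x - f x) + (f x - g x)| := by ring_nf
      _ ≤ M + 1 := (abs_add_le _ _).trans (by linarith)
  refine tendsto_integral_filter_of_dominated_convergence (fun x => |w x| * (M + 1) ^ 2)
    (Eventually.of_forall fun i =>
      hw.aestronglyMeasurable.mul (((hF i).sub hg).pow 2).aestronglyMeasurable)
    ?_ (hw.abs.mul_const _)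
    (Eventually.of_forall fun x =>
      ((((hFf.tendsto_at x).sub_const (g x)).pow 2).const_mul (w x)))
  filter_upwards [hbound] with i hi
  refine Eventually.of_forall fun x => ?_
  rw [norm_mul, Real.norm_eq_abs, Real.norm_of_nonneg (sq_nonneg _)]
  exact mul_le_mul_of_nonneg_left (hi x) (abs_nonneg _)

theorem MonotoneOn.tendsto_nhdsGT_of_tendsto_comp {G : ℝ → ℝ} {x y L : ℝ}
    (hG : MonotoneOn G (Ioo x y)) {s : ℕ → ℝ} (hs : ∀ j, s j ∈ Ioo x y)
    (hsx : Tendsto s atTop (𝓝 x)) (hGs : Tendsto (fun j => G (s j)) atTop (𝓝 L)) :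
    Tendsto G (𝓝[>] x) (𝓝 L) := by
  refine tendsto_order.2 ⟨fun b hb => ?_, fun b hb => ?_⟩
  · filter_upwards [Ioo_mem_nhdsGT ((hs 0).1.trans (hs 0).2)] with r hr
    obtain ⟨j, hbj, hjr⟩ :=
      ((tendsto_order.1 hGs).1 b hb |>.and ((tendsto_order.1 hsx).2 r hr.1)).exists
    exact hbj.trans_le (hG (hs j) hr hjr.le)
  · obtain ⟨j, hj⟩ := ((tendsto_order.1 hGs).2 b hb).exists
    filter_upwards [Ioo_mem_nhdsGT (hs j).1] with r hr
    exact (hG ⟨hr.1, hr.2.trans (hs j).2⟩ (hs j) hr.2.le).trans_lt hj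

theorem exists_tendsto_nhdsGT_of_monotoneOn_dist {X : Type*} [TopologicalSpace X] {v : ℝ → X}
    {P : Set X} {D : X → X → ℝ} {R : ℝ} (hR : 0 < R)
    (hcompact : ∀ s : ℕ → ℝ, (∀ j, s j ∈ Ioo 0 R) → Tendsto s atTop (𝓝 0) →
      ∃ φ : ℕ → ℕ, StrictMono φ ∧ ∃ q ∈ P, Tendsto (fun j => v (s (φ j))) atTop (𝓝 q))
    (hD : ∀ p ∈ P, ∀ q ∈ P, ∀ s : ℕ → ℝ, (∀ j, s j ∈ Ioo 0 R) →
      Tendsto (fun j => v (s j)) atTop (𝓝 q) → Tendsto (fun j => D (v (s j)) p) atTop (𝓝 (D q p)))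
    (hmono : ∀ p ∈ P, MonotoneOn (fun r => D (v r) p) (Ioo 0 R))
    (hself : ∀ p ∈ P, D p p = 0) (hsep : ∀ p ∈ P, ∀ q ∈ P, D q p = 0 → q = p) :
    ∃ p ∈ P, Tendsto v (𝓝[>] 0) (𝓝 p) := by
  obtain ⟨s, -, hs, hs0⟩ := exists_seq_strictAnti_tendsto' hR
  obtain ⟨φ, hφ, p, hpP, hp⟩ := hcompact s hs hs0
  have hDp : Tendsto (fun r => D (v r) p) (𝓝[>] 0) (𝓝 0) := by
    refine (hmono p hpP).tendsto_nhdsGT_of_tendsto_comp (fun j => hs (φ j))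
      (hs0.comp hφ.tendsto_atTop) ?_
    simpa [hself p hpP] using hD p hpP p hpP _ (fun j => hs (φ j)) hp
  refine ⟨p, hpP, tendsto_of_subseq_tendsto fun t ht => ?_⟩
  obtain ⟨N, hN⟩ := eventually_atTop.1 (ht.eventually (Ioo_mem_nhdsGT hR))
  have htN : ∀ j, t (j + N) ∈ Ioo 0 R := fun j => hN _ (Nat.le_add_left N j)
  have ht0 : Tendsto (fun j => t (j + N)) atTop (𝓝[>] 0) := ht.comp (tendsto_add_atTop_nat N)
  obtain ⟨ψ, hψ, q, hqP, hq⟩ := hcompact _ htN (tendsto_nhds_of_tendsto_nhdsWithin ht0)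
  have hqp : D q p = 0 := tendsto_nhds_unique
    (hD p hpP q hqP _ (fun j => htN (ψ j)) hq) (hDp.comp (ht0.comp hψ.tendsto_atTop))
  exact ⟨fun j => ψ j + N, hsep p hpP q hqP hqp ▸ hq⟩

def blowupRescaling {E : Type*} [AddCommGroup E] [Module ℝ E] (u : E → ℝ) (X₀ : E) (k r : ℝ)
    (X : E) : ℝ :=
  u (X₀ + r • X) / r ^ k

def sphereWeightedDistSq (n : ℕ) (a : ℝ) (f g : EuclideanSpace ℝ (Fin (n + 1)) → ℝ) : ℝ :=
  ∫ ω, |(ω : EuclideanSpace ℝ (Fin (n + 1))) (Fin.last n)| ^ a * (f ω - g ω) ^ 2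
    ∂(sphereMeasure n)

theorem monneau_quotient_eq {n : ℕ} {a k r : ℝ} {X₀ : EuclideanSpace ℝ (Fin (n + 1))}
    {u p : EuclideanSpace ℝ (Fin (n + 1)) → ℝ} (hX₀ : X₀ (Fin.last n) = 0)
    (hp : ∀ lam : ℝ, 0 < lam → ∀ X, p (lam • X) = lam ^ k * p X) (hr : 0 < r) :
    r ^ (-((n : ℝ) + a + 2 * k)) *
        sphInt n (fun X => |X (Fin.last n)| ^ a * (u X - p (X - X₀)) ^ 2) X₀ r =
      sphereWeightedDistSq n a (blowupRescaling u X₀ k r) p := by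
  have hpoint : ∀ ω : EuclideanSpace ℝ (Fin (n + 1)),
      |(X₀ + r • ω) (Fin.last n)| ^ a * (u (X₀ + r • ω) - p (X₀ + r • ω - X₀)) ^ 2 =
        r ^ a * (r ^ k) ^ 2 *
          (|ω (Fin.last n)| ^ a * (blowupRescaling u X₀ k r ω - p ω) ^ 2) := by
    intro ω
    rw [add_sub_cancel_left, hp r hr, PiLp.add_apply, PiLp.smul_apply, hX₀, zero_add,
      smul_eq_mul, abs_mul, abs_of_pos hr, Real.mul_rpow hr.le (abs_nonneg _), blowupRescaling]
    field_simp
  have hscale : r ^ (-((n : ℝ) + a + 2 * k)) * (r ^ n * (r ^ a * (r ^ k) ^ 2)) = 1 := by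
    rw [← Real.rpow_natCast, ← Real.rpow_natCast (r ^ k), ← Real.rpow_mul hr.le,
      ← Real.rpow_add hr, ← Real.rpow_add hr, ← Real.rpow_add hr,
      show -((n : ℝ) + a + 2 * k) + (n + (a + k * (2 : ℕ))) = 0 by push_cast; ring,
      Real.rpow_zero]
  simp only [sphInt, sphereWeightedDistSq, hpoint, integral_const_mul]
  rw [← mul_assoc, ← mul_assoc, mul_assoc _ (r ^ n), hscale, one_mul]

theorem continuous_blowupRescaling_sphere {E : Type*} [NormedAddCommGroup E] [NormedSpace ℝ E]
    {u : E → ℝ} {X₀ : E} {R r : ℝ} (hu : ContinuousOn u (ball X₀ R)) (hr : |r| < R) (k : ℝ) :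
    Continuous fun ω : sphere (0 : E) 1 => blowupRescaling u X₀ k r ω := by
  refine (hu.comp_continuous (by fun_prop) fun ω => ?_).div_const _
  rwa [mem_ball, dist_self_add_left, norm_smul, Real.norm_eq_abs,
    norm_eq_of_mem_sphere ω, mul_one]

theorem tendsto_sphereWeightedDistSq {n : ℕ} {a k R : ℝ} (ha : -1 < a)
    {X₀ : EuclideanSpace ℝ (Fin (n + 1))} {u p q : EuclideanSpace ℝ (Fin (n + 1)) → ℝ}
    (hu : ContinuousOn u (ball X₀ R)) (hp : Continuous p) {s : ℕ → ℝ} (hs : ∀ j, |s j| < R)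
    (hq : TendstoUniformlyOn (fun j => blowupRescaling u X₀ k (s j)) q atTop (sphere 0 1)) :
    Tendsto (fun j => sphereWeightedDistSq n a (blowupRescaling u X₀ k (s j)) p) atTop
      (𝓝 (sphereWeightedDistSq n a q p)) :=
  tendsto_integral_mul_sq_sub_of_tendstoUniformly
    (integrable_abs_apply_rpow_toSphere (Fin.last n) ha)
    (fun j => continuous_blowupRescaling_sphere hu (hs j) k) (hp.comp continuous_subtype_val)
    (tendstoUniformlyOn_iff_tendstoUniformly_comp_coe.1 hq)

theorem continuous_of_forall_eq_eval {ι : Type*} [Fintype ι] {p : EuclideanSpace ℝ ι → ℝ}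
    {Q : MvPolynomial ι ℝ} (h : ∀ X, p X = MvPolynomial.eval (fun i => X i) Q) : Continuous p := by
  rw [funext h]
  exact (MvPolynomial.continuous_eval Q).comp (by fun_prop)

theorem exists_lt_of_lt_biSup {α : Type*} {s : Set α} {f : α → ℝ} {b : ℝ} (hb : 0 ≤ b)
    (h : b < ⨆ x ∈ s, f x) : ∃ x ∈ s, b < f x := by
  by_contra! H
  exact h.not_ge (Real.iSup_le (fun x => Real.iSup_le (H x) hb) hb)

theorem exists_lt_abs_blowupRescaling {E : Type*} [NormedAddCommGroup E] [NormedSpace ℝ E]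
    {u : E → ℝ} {X₀ : E} {b c k r : ℝ} (hr : 0 < r) (hb : 0 ≤ b) (hbc : b < c)
    (hgrowth : c * r ^ k ≤ ⨆ X ∈ sphere X₀ r, |u X|) :
    ∃ ω ∈ sphere (0 : E) 1, b < |blowupRescaling u X₀ k r ω| := by
  have hrk : 0 < r ^ k := Real.rpow_pos_of_pos hr k
  obtain ⟨X, hX, hbX⟩ := exists_lt_of_lt_biSup (by positivity)
    ((mul_lt_mul_of_pos_right hbc hrk).trans_le hgrowth)
  refine ⟨r⁻¹ • (X - X₀), ?_, ?_⟩
  · rw [mem_sphere_zero_iff_norm, norm_smul, norm_inv, Real.norm_eq_abs, abs_of_pos hr,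
      ← dist_eq_norm, mem_sphere.1 hX, inv_mul_cancel₀ hr.ne']
  · rwa [blowupRescaling, smul_inv_smul₀ hr.ne', add_sub_cancel, abs_div, abs_of_pos hrk,
      lt_div_iff₀ hrk]

theorem ne_zero_of_tendstoUniformlyOn_blowupRescaling {E : Type*} [NormedAddCommGroup E]
    [NormedSpace ℝ E] {u p : E → ℝ} {X₀ : E} {c k R : ℝ} (hR : 0 < R) (hc : 0 < c)
    (hgrowth : ∀ r ∈ Ioo 0 R, c * r ^ k ≤ ⨆ X ∈ sphere X₀ r, |u X|)
    (hp : TendstoUniformlyOn (blowupRescaling u X₀ k) p (𝓝[>] 0) (sphere 0 1)) : p ≠ 0 := by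
  rintro rfl
  obtain ⟨r, hr, hsmall⟩ :=
    (Filter.Eventually.and (Ioo_mem_nhdsGT hR)
      (Metric.tendstoUniformlyOn_iff.1 hp (c / 2) (half_pos hc))).exists
  obtain ⟨ω, hω, hbig⟩ :=
    exists_lt_abs_blowupRescaling hr.1 (half_pos hc).le (half_lt_self hc) (hgrowth r hr)
  have := hsmall ω hω
  simp only [Pi.zero_apply, dist_zero_left, Real.norm_eq_abs] at this
  linarith

theorem uniqueness_of_blowup_general (n : ℕ) (a k R c C : ℝ)
    (ha : a ∈ Set.Ioo (-1 : ℝ) 1) (hR : 0 < R) (hc : 0 < c)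
    (X₀ : EuclideanSpace ℝ (Fin (n + 1))) (hX₀ : X₀ (Fin.last n) = 0)
    (u : EuclideanSpace ℝ (Fin (n + 1)) → ℝ)
    (hu : ContinuousOn u (Metric.ball X₀ R))
    (hgrowth : ∀ r ∈ Set.Ioo (0 : ℝ) R,
      c * r ^ k ≤ (⨆ X ∈ Metric.sphere X₀ r, |u X|) ∧
      (⨆ X ∈ Metric.sphere X₀ r, |u X|) ≤ C * r ^ k)
    (P : Submodule ℝ (EuclideanSpace ℝ (Fin (n + 1)) → ℝ))
    (hPhom : ∀ p ∈ P, ∀ lam : ℝ, 0 < lam → ∀ X : EuclideanSpace ℝ (Fin (n + 1)),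
      p (lam • X) = lam ^ k * p X)
    (hPpoly : ∀ p ∈ P, ∃ Q : MvPolynomial (Fin (n + 1)) ℝ,
      ∀ X : EuclideanSpace ℝ (Fin (n + 1)), p X = MvPolynomial.eval (fun i => X i) Q)
    (hcompact : ∀ rj : ℕ → ℝ, (∀ j, rj j ∈ Set.Ioo (0 : ℝ) R) →
      Tendsto rj atTop (nhds 0) →
      ∃ φ : ℕ → ℕ, StrictMono φ ∧ ∃ p ∈ P,
        ∀ K : Set (EuclideanSpace ℝ (Fin (n + 1))), IsCompact K →
          TendstoUniformlyOn
            (fun j X => u (X₀ + (rj (φ j)) • X) / (rj (φ j)) ^ k) p atTop K)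
    (hsep : ∀ p ∈ P, ∀ q ∈ P,
      (∫ ω, |(ω : EuclideanSpace ℝ (Fin (n + 1))) (Fin.last n)| ^ a *
          (p (ω : EuclideanSpace ℝ (Fin (n + 1))) -
            q (ω : EuclideanSpace ℝ (Fin (n + 1)))) ^ 2 ∂(sphereMeasure n)) = 0 →
      p = q)
    (hMonneau : ∀ p ∈ P, MonotoneOn
      (fun r => r ^ (-((n : ℝ) + a + 2 * k)) *
        sphInt n (fun X => |X (Fin.last n)| ^ a * (u X - p (X - X₀)) ^ 2) X₀ r)
      (Set.Ioo (0 : ℝ) R)) :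
    ∃! p : EuclideanSpace ℝ (Fin (n + 1)) → ℝ,
      p ∈ P ∧ p ≠ 0 ∧
      ∀ K : Set (EuclideanSpace ℝ (Fin (n + 1))), IsCompact K →
        TendstoUniformlyOn (fun r X => u (X₀ + r • X) / r ^ k) p
          (nhdsWithin 0 (Set.Ioi 0)) K := by
  -- `_ →ᵤ[𝔎] ℝ` carries the topology of uniform convergence on compact sets.
  let 𝔎 : Set (Set (EuclideanSpace ℝ (Fin (n + 1)))) := {K | IsCompact K}
  have hP_cont : ∀ p ∈ P, Continuous p := fun p hp =>
    (hPpoly p hp).elim fun _ hQ => continuous_of_forall_eq_eval hQ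
  have hr_abs : ∀ {r}, r ∈ Ioo 0 R → |r| < R := fun hr => (abs_of_pos hr.1).trans_lt hr.2
  obtain ⟨_, ⟨p, hpP, rfl⟩, hp⟩ := exists_tendsto_nhdsGT_of_monotoneOn_dist
    (v := fun r => UniformOnFun.ofFun 𝔎 (blowupRescaling u X₀ k r))
    (P := UniformOnFun.ofFun 𝔎 '' P)
    (D := fun f g => sphereWeightedDistSq n a (UniformOnFun.toFun 𝔎 f) (UniformOnFun.toFun 𝔎 g))
    hR
    (fun s hs hs0 => by
      obtain ⟨φ, hφ, q, hqP, hq⟩ := hcompact s hs hs0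
      exact ⟨φ, hφ, _, mem_image_of_mem _ hqP, UniformOnFun.tendsto_iff_tendstoUniformlyOn.2 hq⟩)
    (by
      rintro _ ⟨p, hpP, rfl⟩ _ ⟨q, -, rfl⟩ s hs hq
      exact tendsto_sphereWeightedDistSq ha.1 hu (hP_cont p hpP) (fun j => hr_abs (hs j))
        (UniformOnFun.tendsto_iff_tendstoUniformlyOn.1 hq _ (isCompact_sphere 0 1)))
    (by
      rintro _ ⟨p, hpP, rfl⟩
      exact (hMonneau p hpP).congr fun r hr => monneau_quotient_eq hX₀ (hPhom p hpP) hr.1)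
    (by rintro _ ⟨p, -, rfl⟩; simp [sphereWeightedDistSq])
    (by
      rintro _ ⟨p, hpP, rfl⟩ _ ⟨q, hqP, rfl⟩ h
      rw [hsep q hqP p hpP h])
  rw [UniformOnFun.tendsto_iff_tendstoUniformlyOn] at hp
  have hp0 : p ≠ 0 := ne_zero_of_tendstoUniformlyOn_blowupRescaling hR hc
    (fun r hr => (hgrowth r hr).1) (hp _ (isCompact_sphere 0 1))
  refine ⟨p, ⟨hpP, hp0, hp⟩, fun q ⟨_, _, hq⟩ => funext fun X => ?_⟩
  exact tendsto_nhds_unique ((hq {X} isCompact_singleton).tendsto_at rfl)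
    ((hp {X} isCompact_singleton).tendsto_at rfl)

/-- Uniqueness of the blow-up limit: under nondegeneracy and growth of
order `k` at `X₀ ∈ Σ`, compactness of rescalings along sequences with subsequential limits in
a fixed finite-dimensional space `P` of `k`-homogeneous polynomials, an `L²(|y|^a dσ)`
separation property on `∂B₁`, and Monneau monotonicity, there is exactly one nonzero
`p ∈ P` with `u(X₀ + rX)/r^k → p(X)` locally uniformly as `r → 0⁺`. -/
theorem uniqueness_of_blowup (n : ℕ) (a k R c C : ℝ)
    (ha : a ∈ Set.Ioo (-1 : ℝ) 1) (hk : 1 ≤ k) (hR : 0 < R) (hc : 0 < c) (hC : 0 < C)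
    (X₀ : EuclideanSpace ℝ (Fin (n + 1))) (hX₀ : X₀ (Fin.last n) = 0)
    (u : EuclideanSpace ℝ (Fin (n + 1)) → ℝ)
    (hu : ContinuousOn u (Metric.ball X₀ R)) (hzero : u X₀ = 0)
    (hgrowth : ∀ r ∈ Set.Ioo (0 : ℝ) R,
      c * r ^ k ≤ (⨆ X ∈ Metric.sphere X₀ r, |u X|) ∧
      (⨆ X ∈ Metric.sphere X₀ r, |u X|) ≤ C * r ^ k)
    (P : Submodule ℝ (EuclideanSpace ℝ (Fin (n + 1)) → ℝ))
    (hPfd : FiniteDimensional ℝ P)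
    (hPhom : ∀ p ∈ P, ∀ lam : ℝ, 0 < lam → ∀ X : EuclideanSpace ℝ (Fin (n + 1)),
      p (lam • X) = lam ^ k * p X)
    (hPpoly : ∀ p ∈ P, ∃ Q : MvPolynomial (Fin (n + 1)) ℝ,
      ∀ X : EuclideanSpace ℝ (Fin (n + 1)), p X = MvPolynomial.eval (fun i => X i) Q)
    (hcompact : ∀ rj : ℕ → ℝ, (∀ j, rj j ∈ Set.Ioo (0 : ℝ) R) →
      Tendsto rj atTop (nhds 0) →
      ∃ φ : ℕ → ℕ, StrictMono φ ∧ ∃ p ∈ P,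
        ∀ K : Set (EuclideanSpace ℝ (Fin (n + 1))), IsCompact K →
          TendstoUniformlyOn
            (fun j X => u (X₀ + (rj (φ j)) • X) / (rj (φ j)) ^ k) p atTop K)
    (hsep : ∀ p ∈ P, ∀ q ∈ P,
      (∫ ω, |(ω : EuclideanSpace ℝ (Fin (n + 1))) (Fin.last n)| ^ a *
          (p (ω : EuclideanSpace ℝ (Fin (n + 1))) -
            q (ω : EuclideanSpace ℝ (Fin (n + 1)))) ^ 2 ∂(sphereMeasure n)) = 0 →
      p = q)
    (hMonneau : ∀ p ∈ P, MonotoneOn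
      (fun r => r ^ (-((n : ℝ) + a + 2 * k)) *
        sphInt n (fun X => |X (Fin.last n)| ^ a * (u X - p (X - X₀)) ^ 2) X₀ r)
      (Set.Ioo (0 : ℝ) R)) :
    ∃! p : EuclideanSpace ℝ (Fin (n + 1)) → ℝ,
      p ∈ P ∧ p ≠ 0 ∧
      ∀ K : Set (EuclideanSpace ℝ (Fin (n + 1))), IsCompact K →
        TendstoUniformlyOn (fun r X => u (X₀ + r • X) / r ^ k) p
          (nhdsWithin 0 (Set.Ioi 0)) K :=
  uniqueness_of_blowup_general n a k R c C ha hR hc X₀ hX₀ u hu hgrowth P hPhom hPpoly hcompact hsep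
    hMonneau
end
end
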